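/- For p < 1/2 and n ≥ 2, ∏_{j=1}^{n−1} ((2/(n−j+1))p + 1 − 2/(n−j+1)) < 1/n. -/

import Mathlib

/-!
Writing `k = n - j ∈ {2, …, n}`, the `j`-th factor is `1 - (2 / k) (1 - p)`. It is positive
because `p > 0`, and strictly smaller than `1 - 1 / k = (k - 1) / k` because `p < 1 / 2`.
The product of the `(k - 1) / k` telescopes to `1 / n`.
-/

open Finset

theorem prod_range_sub_div_add_one_sub (m : ℕ) :
    ∏ j ∈ range m, (((m : ℝ) - j) / (m + 1 - j)) = 1 / (m + 1) := by
  induction m with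
  | zero => simp
  | succ m ih =>
    rw [prod_range_succ']
    have hshift : ∀ j ∈ range m,
        ((m + 1 : ℕ) - ((j + 1 : ℕ) : ℝ)) / ((m + 1 : ℕ) + 1 - ((j + 1 : ℕ) : ℝ))
          = ((m : ℝ) - j) / (m + 1 - j) := by
      intro j _
      push_cast
      ring_nf
    rw [prod_congr rfl hshift, ih]
    push_cast
    rw [sub_zero, sub_zero]
    field_simp

theorem two_div_mul_add_one_sub_two_div_pos {x p : ℝ} (hx : 2 ≤ x) (hp : 0 < p) :
    0 < 2 / x * p + 1 - 2 / x := by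
  have : 2 / x ≤ 1 := (div_le_one (by linarith)).mpr hx
  have : 0 < 2 / x * p := by positivity
  linarith

theorem two_div_mul_add_one_sub_two_div_lt {x p : ℝ} (hx : 0 < x) (hp : p < 1 / 2) :
    2 / x * p + 1 - 2 / x < (x - 1) / x := by
  rw [lt_div_iff₀ hx]
  field_simp
  linarith

theorem stmt_13 (n : ℕ) (hn : 2 ≤ n) (p : ℝ) (hp : p ∈ Set.Ioo (0 : ℝ) (1/2)) :
    ∏ j ∈ Finset.range (n - 1), ((2 / ((n : ℝ) - j)) * p + 1 - 2 / ((n : ℝ) - j)) < 1 / n := by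
  obtain ⟨m, rfl⟩ : ∃ m, n = m + 1 := ⟨n - 1, by omega⟩
  have hm : 0 < m := by omega
  have hk : ∀ j ∈ range m, (2 : ℝ) ≤ (m + 1 : ℕ) - j := by
    intro j hj
    have : j + 1 ≤ m := mem_range.mp hj
    have : ((j + 1 : ℕ) : ℝ) ≤ m := by exact_mod_cast this
    push_cast at this ⊢
    linarith
  calc ∏ j ∈ range (m + 1 - 1),
        (2 / (((m + 1 : ℕ) : ℝ) - j) * p + 1 - 2 / ((m + 1 : ℕ) - j))
      < ∏ j ∈ range m, ((((m + 1 : ℕ) : ℝ) - j - 1) / ((m + 1 : ℕ) - j)) := by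
        rw [Nat.add_sub_cancel]
        refine prod_lt_prod_of_nonempty (fun j hj => ?_) (fun j hj => ?_)
          (nonempty_range_iff.mpr hm.ne')
        · exact two_div_mul_add_one_sub_two_div_pos (hk j hj) hp.1
        · exact two_div_mul_add_one_sub_two_div_lt (by linarith [hk j hj]) hp.2
    _ = 1 / ((m + 1 : ℕ) : ℝ) := by
        push_cast
        rw [← prod_range_sub_div_add_one_sub m]
        exact prod_congr rfl fun j _ => by ring
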